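/- arXiv:2106.13159 — 7 statements merged into one kernel-verified Lean document; each statement's English description precedes it below -/
import Mathlib

section
/- Let P, N, K be positive integers with P dividing N-1, P dividing K-1, and K < N. Let S_{P,N,K} be the numerical semigroup generated by {KN + aN - j : 0 ≤ j ≤ a ≤ P}. Then the Frobenius number (largest gap) of S_{P,N,K} is ((K+N-2)/P)·K·N + N² - 3N + 1, equivalently the conductor of S_{P,N,K} equals (N²K + NK² + N²P - 2NK - 3NP + 2P)/P. -/
/-!
A sum of `m` generators is `(m K + A) N - J` with `0 ≤ J ≤ A ≤ m P`, so `n ∈ S` iff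
`n + J = c N` for some `J` and some `c` in a window `[m K + J, m (K + P)]`. Let
`q = (K + N - 2) / P` and `F = q K N + N² - 3 N + 1`. For `m ≥ q` consecutive windows overlap
(`m P + 1 ≥ K + J` as soon as `J ≤ N - 1`), and every `n > F` has a `J < N` with `c ≥ q K + J`,
so `n ∈ S`. For `F` itself, `F + J = c N` forces `J = N t - 1` with `t ≥ 1`, and then
`J ≤ A ≤ m P` is incompatible with `q P = K + N - 2`.
-/

def pnkSemigroup (P N K : ℕ) : AddSubmonoid ℕ :=
  AddSubmonoid.closure {x : ℕ | ∃ a j : ℕ, j ≤ a ∧ a ≤ P ∧ x = K * N + a * N - j}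

theorem exists_split_of_le_of_le_succ_mul {P m A J : ℕ} (hJA : J ≤ A) (hA : A ≤ (m + 1) * P) :
    ∃ a j A' J', j ≤ a ∧ a ≤ P ∧ J' ≤ A' ∧ A' ≤ m * P ∧ A = a + A' ∧ J = j + J' := by
  have : (m + 1) * P = m * P + P := by ring
  exact ⟨min A P, min J (min A P), A - min A P, J - min J (min A P), by omega, by omega,
    by omega, by omega, by omega, by omega⟩

theorem mem_pnkSemigroup_iff {P N K n : ℕ} (hN : 0 < N) :
    n ∈ pnkSemigroup P N K ↔ ∃ m A J, J ≤ A ∧ A ≤ m * P ∧ n + J = (m * K + A) * N := by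
  constructor
  · intro h
    induction h using AddSubmonoid.closure_induction with
    | mem x hx =>
      obtain ⟨a, j, hja, haP, rfl⟩ := hx
      have : a ≤ a * N := Nat.le_mul_of_pos_right a hN
      exact ⟨1, a, j, hja, by simpa using haP, by rw [one_mul, add_mul]; omega⟩
    | zero => exact ⟨0, 0, 0, le_rfl, by simp, by simp⟩
    | add x y _ _ hx hy =>
      obtain ⟨m, A, J, hJA, hA, hx⟩ := hx
      obtain ⟨m', A', J', hJA', hA', hy⟩ := hy
      refine ⟨m + m', A + A', J + J', by omega, by rw [add_mul]; omega, ?_⟩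
      linear_combination hx + hy
  · rintro ⟨m, A, J, hJA, hA, hn⟩
    induction m generalizing n A J with
    | zero =>
      obtain rfl : A = 0 := by simpa using hA
      obtain rfl : n = 0 := by simp at hn; omega
      exact zero_mem _
    | succ m ih =>
      obtain ⟨a, j, A', J', hja, haP, hJA', hA', rfl, rfl⟩ :=
        exists_split_of_le_of_le_succ_mul hJA hA
      have hgen : K * N + a * N - j ∈ pnkSemigroup P N K :=
        AddSubmonoid.subset_closure ⟨a, j, hja, haP, rfl⟩
      have hj : j ≤ a * N := (Nat.le_mul_of_pos_right a hN).trans' hja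
      have hJ' : J' ≤ (m * K + A') * N :=
        (Nat.le_mul_of_pos_right _ hN).trans' (hJA'.trans (Nat.le_add_left _ _))
      have hsum : ((m + 1) * K + (a + A')) * N = (K * N + a * N) + (m * K + A') * N := by ring
      have hrest := ih (n := (m * K + A') * N - J') _ _ hJA' hA' (by omega)
      convert add_mem hgen hrest using 1
      omega

theorem exists_add_eq_mul (n : ℕ) {N : ℕ} (hN : 0 < N) : ∃ c J, J < N ∧ n + J = c * N := by
  have hle := Nat.div_mul_le_self (n + N - 1) N
  have hlt := Nat.lt_div_mul_add (a := n + N - 1) hN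
  exact ⟨(n + N - 1) / N, (n + N - 1) / N * N - n, by omega, by omega⟩

theorem exists_eq_mul_add_of_le {P K J q c : ℕ} (hKP : 0 < K + P) (hJ : K + J ≤ q * P + 1)
    (hc : q * K + J ≤ c) : ∃ m A, J ≤ A ∧ A ≤ m * P ∧ c = m * K + A := by
  suffices ∀ m, q ≤ m → c ≤ m * (K + P) → ∃ m A, J ≤ A ∧ A ≤ m * P ∧ c = m * K + A from
    this (max q c) (le_max_left _ _)
      ((Nat.le_mul_of_pos_right c hKP).trans (Nat.mul_le_mul_right _ (le_max_right _ _)))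
  intro m hqm
  induction m, hqm using Nat.le_induction with
  | base => intro hcq; exact ⟨q, c - q * K, by omega, by rw [mul_add] at hcq; omega, by omega⟩
  | succ m hqm ih =>
    intro hcm
    by_cases hcm' : c ≤ m * (K + P)
    · exact ih hcm'
    · have : q * P ≤ m * P := Nat.mul_le_mul_right P hqm
      have h1 : (m + 1) * (K + P) = m * K + m * P + K + P := by ring
      have h2 : m * (K + P) = m * K + m * P := by ring
      have h3 : (m + 1) * K = m * K + K := by ring
      have h4 : (m + 1) * P = m * P + P := by ring
      exact ⟨m + 1, c - (m + 1) * K, by omega, by omega, by omega⟩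

theorem notMem_pnkSemigroup {P N K q F : ℕ} (hP : 0 < P) (hN : 0 < N) (hq : q * P + 2 = K + N)
    (hF : (F : ℤ) = q * K * N + N ^ 2 - 3 * N + 1) : F ∉ pnkSemigroup P N K := by
  rw [mem_pnkSemigroup_iff hN]
  rintro ⟨m, A, J, hJA, hA, hFJ⟩
  zify at hP hN hq hJA hA hFJ
  obtain ⟨t, ht⟩ : ∃ t : ℤ, t = m * K + A - q * K - N + 3 := ⟨_, rfl⟩
  obtain ⟨s, hs⟩ : ∃ s : ℤ, s = q - m := ⟨_, rfl⟩
  have hJt : (J : ℤ) + 1 = N * t := by rw [ht]; linear_combination hFJ - hF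
  have hAst : (A : ℤ) = s * K + N - 3 + t := by rw [hs, ht]; ring
  have ht1 : 0 < t := pos_of_mul_pos_right (by omega : (0 : ℤ) < N * t) hN.le
  have hsK : 0 < s * K := by
    nlinarith [mul_nonneg (by omega : (0 : ℤ) ≤ t - 1) (by omega : (0 : ℤ) ≤ N - 1)]
  have hs1 : 0 < s := pos_of_mul_pos_left hsK (Nat.cast_nonneg K)
  nlinarith [mul_le_mul_of_nonneg_right hs1 (by positivity : (0 : ℤ) ≤ K + P)]

theorem mem_pnkSemigroup_of_lt {P N K q F n : ℕ} (hN : 0 < N) (hKP : 0 < K + P)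
    (hq : q * P + 2 = K + N) (hF : (F : ℤ) = q * K * N + N ^ 2 - 3 * N + 1) (hn : F < n) :
    n ∈ pnkSemigroup P N K := by
  obtain ⟨c, J, hJN, hnJ⟩ := exists_add_eq_mul n hN
  have hc : q * K + J ≤ c := by
    by_contra! hc
    zify at hJN hnJ hc hn hN
    nlinarith [mul_le_mul_of_nonneg_right hc hN.le,
      mul_nonneg (by omega : (0 : ℤ) ≤ N - 1 - J) (by omega : (0 : ℤ) ≤ N - 1)]
  obtain ⟨m, A, hJA, hA, rfl⟩ := exists_eq_mul_add_of_le hKP (by omega) hc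
  exact (mem_pnkSemigroup_iff hN).2 ⟨m, A, J, hJA, hA, hnJ⟩

theorem stmt_0_general (P N K : ℕ) (hP : 0 < P) (hK : 0 < K)
    (hPN : P ∣ N - 1) (hPK : P ∣ K - 1) (hKN : K < N)
    (S : AddSubmonoid ℕ)
    (hS : S = AddSubmonoid.closure
      {x : ℕ | ∃ a j : ℕ, j ≤ a ∧ a ≤ P ∧ x = K * N + a * N - j}) :
    ∃ F : ℕ, IsGreatest {n : ℕ | n ∉ S} F ∧
      (F : ℚ) = ((K : ℚ) + N - 2) / P * K * N + (N : ℚ) ^ 2 - 3 * N + 1 ∧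
      (F : ℚ) + 1 = ((N : ℚ) ^ 2 * K + N * K ^ 2 + N ^ 2 * P - 2 * N * K
        - 3 * N * P + 2 * P) / P := by
  subst hS
  obtain ⟨q, hq⟩ : ∃ q, q * P + 2 = K + N := by
    obtain ⟨u, hu⟩ := hPN
    obtain ⟨v, hv⟩ := hPK
    exact ⟨u + v, by rw [add_mul, mul_comm u, mul_comm v]; omega⟩
  have hN : 0 < N := hK.trans hKN
  have hF0 : (0 : ℤ) ≤ q * K * N + N ^ 2 - 3 * N + 1 := by
    have hqK : 1 ≤ q * K := Nat.one_le_iff_ne_zero.2 (mul_ne_zero (by rintro rfl; omega) hK.ne')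
    zify at hqK hN
    nlinarith
  lift (q * K * N + N ^ 2 - 3 * N + 1 : ℤ) to ℕ using hF0 with F hF
  have hFQ : (F : ℚ) = q * K * N + N ^ 2 - 3 * N + 1 := by exact_mod_cast hF
  have hqQ : (q * P + 2 : ℚ) = K + N := by exact_mod_cast hq
  have hP0 : (P : ℚ) ≠ 0 := by positivity
  refine ⟨F, ⟨notMem_pnkSemigroup hP hN hq hF, fun n hn => ?_⟩, ?_, ?_⟩
  · exact not_lt.1 fun h => hn (mem_pnkSemigroup_of_lt hN (by omega) hq hF h)
  · rw [← hqQ, add_sub_cancel_right, mul_div_cancel_right₀ _ hP0]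
    exact hFQ
  · rw [eq_div_iff hP0]
    linear_combination (P : ℚ) * hFQ + (N : ℚ) * K * hqQ

theorem stmt_0 (P N K : ℕ) (hP : 0 < P) (hN : 0 < N) (hK : 0 < K)
    (hPN : P ∣ N - 1) (hPK : P ∣ K - 1) (hKN : K < N)
    (S : AddSubmonoid ℕ)
    (hS : S = AddSubmonoid.closure
      {x : ℕ | ∃ a j : ℕ, j ≤ a ∧ a ≤ P ∧ x = K * N + a * N - j}) :
    ∃ F : ℕ, IsGreatest {n : ℕ | n ∉ S} F ∧
      (F : ℚ) = ((K : ℚ) + N - 2) / P * K * N + (N : ℚ) ^ 2 - 3 * N + 1 ∧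
      (F : ℚ) + 1 = ((N : ℚ) ^ 2 * K + N * K ^ 2 + N ^ 2 * P - 2 * N * K
        - 3 * N * P + 2 * P) / P :=
  stmt_0_general P N K hP hK hPN hPK hKN S hS
end

section
/- Let P, N, K be positive integers with P dividing N-1, P dividing K-1, and K < N. Let S_{P,N,K} be the numerical semigroup generated by {KN + aN - j : 0 ≤ j ≤ a ≤ P}. Then the genus (number of gaps) of S_{P,N,K} equals (N²K + NK² + N²P + NKP - 3NK - 3NP + P + 1)/(2P). -/
/-!
A sum of `t` generators is exactly a number `M N - J` with `t K ≤ M ≤ t (K + P)` and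
`J ≤ M - t K`. Write a positive `n` uniquely as `m N - j` with `j < N`, and then `m` as
`t (K + P) - s` with `s < K + P`; since `t` is the least number of generators whose sums can
reach multiplier `m`, `n` is a gap iff `t P < s + j`. So gaps correspond to triples `(s, j, t)`
with `s < K + P`, `j < N` and `1 ≤ t ≤ (s + j - 1) / P`, and the genus is the double sum of
`(s + j - 1) / P`. As `N ≡ K + P ≡ 1 (mod P)`, both ranges consist of whole blocks of `P`
consecutive integers plus one term, and each block of `P` consecutive quotients sums in closed form.
-/

open Finset

namespace Nat

theorem sum_range_add_div (P c : ℕ) (hP : 0 < P) : ∑ i ∈ range P, (c + i) / P = c := by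
  induction c with
  | zero => exact sum_eq_zero fun i hi => Nat.div_eq_of_lt (by simpa using hi)
  | succ c ih =>
    -- shifting `c` by one trades the term `c / P` for `(c + P) / P = c / P + 1`
    have h := sum_range_succ' (fun i => (c + i) / P) P
    rw [sum_range_succ, ih, add_div_right c hP] at h
    simp only [add_zero, ← add_assoc, add_right_comm c _ 1] at h
    omega

theorem sum_range_mul_add_div (P c L : ℕ) (hP : 0 < P) :
    ∑ i ∈ range (L * P), (c + i) / P = L * c + P * L.choose 2 := by
  induction L with
  | zero => simp
  | succ L ih =>
    rw [succ_mul, sum_range_add, ih, choose_succ_succ', choose_one_right]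
    simp only [← add_assoc, sum_range_add_div P (c + L * P) hP]
    ring

theorem sum_range_id_eq_choose_two (n : ℕ) : ∑ i ∈ range n, i = n.choose 2 := by
  rw [sum_range_id, choose_two_right]

theorem sum_range_sum_range_sub_one_div (P L R : ℕ) (hP : 0 < P) :
    ∑ s ∈ range (R * P + 1), ∑ j ∈ range (L * P + 1), (s + j - 1) / P =
      P * R.choose 2 + L * (R * P + 1).choose 2 + (R * P + 1) * (P * L.choose 2) := by
  have inner : ∀ s, ∑ j ∈ range (L * P + 1), (s + j - 1) / P =
      (s - 1) / P + (L * s + P * L.choose 2) := by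
    intro s
    rw [sum_range_succ', ← sum_range_mul_add_div P s L hP, add_comm]
    rfl
  have outer : ∑ s ∈ range (R * P + 1), (s - 1) / P = P * R.choose 2 := by
    rw [sum_range_succ']
    simpa using sum_range_mul_add_div P 0 R hP
  rw [sum_congr rfl fun s _ => inner s, sum_add_distrib, outer, sum_add_distrib, ← mul_sum,
    sum_range_id_eq_choose_two, sum_const, card_range, smul_eq_mul]
  ring

theorem exists_add_eq_mul (N n : ℕ) (hN : 0 < N) : ∃ m j, j < N ∧ n + j = m * N := by
  refine ⟨(n + N - 1) / N, N - 1 - (n + N - 1) % N, by omega, ?_⟩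
  have h := div_add_mod (n + N - 1) N
  have := mod_lt (n + N - 1) hN
  rw [mul_comm] at h
  omega

theorem eq_and_eq_of_add_eq_mul {N n m₁ m₂ j₁ j₂ : ℕ} (hj₁ : j₁ < N) (hj₂ : j₂ < N)
    (h₁ : n + j₁ = m₁ * N) (h₂ : n + j₂ = m₂ * N) : m₁ = m₂ ∧ j₁ = j₂ := by
  have hm : m₁ = m₂ := by
    by_contra hne
    rcases Nat.lt_or_gt_of_ne hne with h | h
    · have := Nat.mul_le_mul_right N (succ_le_of_lt h); rw [succ_mul] at this; omega
    · have := Nat.mul_le_mul_right N (succ_le_of_lt h); rw [succ_mul] at this; omega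
  subst hm
  exact ⟨rfl, by omega⟩

end Nat

namespace SemigroupSPNK

def generators (P N K : ℕ) : Set ℕ := {x | ∃ a j : ℕ, j ≤ a ∧ a ≤ P ∧ x = K * N + a * N - j}

section Generators

variable {P N K : ℕ}

theorem mem_closure_generators_of_le (hN : 0 < N) {t A J n : ℕ} (ht : 0 < t) (hJ : J ≤ A)
    (hA : A ≤ t * P) (hn : n + J = (t * K + A) * N) :
    n ∈ AddSubmonoid.closure (generators P N K) := by
  induction t, ht using Nat.le_induction generalizing A J n with
  | base =>
    refine AddSubmonoid.subset_closure ⟨A, J, hJ, by omega, ?_⟩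
    rw [← add_mul]
    simp only [Nat.succ_eq_add_one, zero_add, one_mul] at hn
    omega
  | succ t _ ih =>
    -- split off one generator `(K + a) N - j`, taking `a` and `j` as large as allowed
    set a := min A P
    set j := min J a
    rw [add_mul, one_mul] at hA
    have hsplit : ((t + 1) * K + A) * N = (K + a) * N + (t * K + (A - a)) * N := by
      rw [← add_mul, add_one_mul]
      congr 1
      omega
    have hj : j ≤ (K + a) * N := (by omega : j ≤ K + a).trans (Nat.le_mul_of_pos_right _ hN)
    have hJ' : J - j ≤ (t * K + (A - a)) * N :=
      (by omega : J - j ≤ t * K + (A - a)).trans (Nat.le_mul_of_pos_right _ hN)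
    obtain rfl : n = ((K + a) * N - j) + ((t * K + (A - a)) * N - (J - j)) := by omega
    exact add_mem (AddSubmonoid.subset_closure ⟨a, j, by omega, by omega, by rw [add_mul]⟩)
      (ih (by omega) (by omega) (Nat.sub_add_cancel hJ'))

theorem exists_of_mem_closure_generators (hN : 0 < N) {n : ℕ}
    (hn : n ∈ AddSubmonoid.closure (generators P N K)) :
    n = 0 ∨ ∃ t A J, 0 < t ∧ J ≤ A ∧ A ≤ t * P ∧ n + J = (t * K + A) * N := by
  induction hn using AddSubmonoid.closure_induction with
  | mem x hx =>
    obtain ⟨a, j, hja, haP, rfl⟩ := hx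
    have : j ≤ a * N := hja.trans (Nat.le_mul_of_pos_right _ hN)
    exact .inr ⟨1, a, j, one_pos, hja, by omega, by rw [one_mul, add_mul]; omega⟩
  | zero => exact .inl rfl
  | add x y _ _ hx hy =>
    rcases hx with rfl | ⟨t₁, A₁, J₁, ht₁, hJ₁, hA₁, hx⟩
    · simpa using hy
    rcases hy with rfl | ⟨t₂, A₂, J₂, ht₂, hJ₂, hA₂, hy⟩
    · exact .inr ⟨t₁, A₁, J₁, ht₁, hJ₁, hA₁, by simpa using hx⟩
    have : ((t₁ + t₂) * K + (A₁ + A₂)) * N = (t₁ * K + A₁) * N + (t₂ * K + A₂) * N := by ring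
    exact .inr ⟨t₁ + t₂, A₁ + A₂, J₁ + J₂, by omega, by omega, by rw [add_mul]; omega, by omega⟩

theorem mem_closure_generators_iff (hN : 0 < N) {n j m : ℕ} (hj : j < N) (hn : n + j = m * N) :
    n ∈ AddSubmonoid.closure (generators P N K) ↔
      n = 0 ∨ ∃ t, 0 < t ∧ j + t * K ≤ m ∧ m ≤ t * (K + P) := by
  constructor
  · intro h
    rcases exists_of_mem_closure_generators hN h with h0 | ⟨t, A, J, ht, hJ, hA, hnJ⟩
    · exact .inl h0
    refine .inr ⟨t, ht, ?_⟩
    have hm : m ≤ t * K + A := by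
      by_contra! hlt
      have := Nat.mul_le_mul_right N (Nat.succ_le_of_lt hlt)
      rw [Nat.succ_mul] at this
      omega
    obtain ⟨d, hd⟩ := Nat.exists_eq_add_of_le hm
    have : d ≤ d * N := Nat.le_mul_of_pos_right _ hN
    rw [hd, add_mul] at hnJ
    rw [mul_add]
    omega
  · rintro (rfl | ⟨t, ht, hjm, hmt⟩)
    · exact zero_mem _
    · rw [mul_add] at hmt
      exact mem_closure_generators_of_le hN ht (A := m - t * K) (J := j) (by omega) (by omega)
        (by rwa [Nat.add_sub_cancel' (by omega)])

theorem exists_mul_le_iff {j m s t : ℕ} (hs : s < K + P) (ht : 0 < t) (hm : m + s = t * (K + P)) :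
    (∃ t', 0 < t' ∧ j + t' * K ≤ m ∧ m ≤ t' * (K + P)) ↔ j + s ≤ t * P := by
  rw [mul_add] at hm
  constructor
  · rintro ⟨t', _, hjm, hmt'⟩
    rw [mul_add] at hmt'
    -- `t` is the least `t'` with `m ≤ t' (K + P)`
    have htt' : t ≤ t' := by
      by_contra! hlt
      have := Nat.mul_le_mul_right (K + P) (Nat.succ_le_of_lt hlt)
      rw [Nat.succ_mul, mul_add, mul_add] at this
      omega
    have := Nat.mul_le_mul_right K htt'
    omega
  · intro h
    exact ⟨t, ht, by omega, by rw [mul_add]; omega⟩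

theorem notMem_closure_generators_iff (hP : 0 < P) (hN : 0 < N) {n : ℕ} :
    n ∉ AddSubmonoid.closure (generators P N K) ↔
      ∃ s j t, s < K + P ∧ j < N ∧ 0 < t ∧ t * P < s + j ∧ n + j = (t * (K + P) - s) * N := by
  constructor
  · intro hn
    obtain ⟨m, j, hj, hnm⟩ := Nat.exists_add_eq_mul N n hN
    obtain ⟨t, s, hs, hmt⟩ := Nat.exists_add_eq_mul (K + P) m (by omega)
    have ht : 0 < t := by
      refine Nat.pos_of_ne_zero ?_
      rintro rfl
      obtain rfl : m = 0 := by omega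
      obtain rfl : n = 0 := by omega
      exact hn (zero_mem _)
    rw [mem_closure_generators_iff hN hj hnm, exists_mul_le_iff hs ht hmt] at hn
    refine ⟨s, j, t, hs, hj, ht, by omega, by rwa [← hmt, Nat.add_sub_cancel]⟩
  · rintro ⟨s, j, t, hs, hj, ht, hst, hn⟩
    have hKP : K + P ≤ t * (K + P) := Nat.le_mul_of_pos_left _ ht
    have hmt : t * (K + P) - s + s = t * (K + P) := by omega
    rw [mem_closure_generators_iff hN hj hn, exists_mul_le_iff hs ht hmt]
    rintro (rfl | h)
    · have := Nat.le_mul_of_pos_left N (by omega : 0 < t * (K + P) - s)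
      omega
    · omega

end Generators

section Counting

variable (P N K : ℕ)

def gapIndex : Finset ((_ : ℕ × ℕ) × ℕ) :=
  (range (K + P) ×ˢ range N).sigma fun x => Icc 1 ((x.1 + x.2 - 1) / P)

def gapOf (x : (_ : ℕ × ℕ) × ℕ) : ℕ := (x.2 * (K + P) - x.1.1) * N - x.1.2

variable {P N K}

theorem mem_gapIndex (hP : 0 < P) {s j t : ℕ} :
    ⟨(s, j), t⟩ ∈ gapIndex P N K ↔ s < K + P ∧ j < N ∧ 0 < t ∧ t * P < s + j := by
  have := Nat.le_mul_of_pos_right t hP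
  simp only [gapIndex, mem_sigma, mem_product, mem_range, mem_Icc, Nat.le_div_iff_mul_le hP]
  omega

theorem gapOf_add_eq (hP : 0 < P) {s j t : ℕ} (hx : ⟨(s, j), t⟩ ∈ gapIndex P N K) :
    gapOf P N K ⟨(s, j), t⟩ + j = (t * (K + P) - s) * N := by
  obtain ⟨hs, hj, ht, -⟩ := (mem_gapIndex hP).1 hx
  have := Nat.le_mul_of_pos_left (K + P) ht
  have := Nat.le_mul_of_pos_left N (by omega : 0 < t * (K + P) - s)
  exact Nat.sub_add_cancel (by omega : j ≤ (t * (K + P) - s) * N)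

theorem injOn_gapOf (hP : 0 < P) : Set.InjOn (gapOf P N K) (gapIndex P N K) := by
  rintro ⟨⟨s₁, j₁⟩, t₁⟩ hx ⟨⟨s₂, j₂⟩, t₂⟩ hy h
  have h₁ := gapOf_add_eq hP hx
  have h₂ := gapOf_add_eq hP hy
  rw [mem_coe, mem_gapIndex hP] at hx hy
  -- both decompositions `n = m N - j` and `m = t (K + P) - s` are unique
  obtain ⟨hm, rfl⟩ := Nat.eq_and_eq_of_add_eq_mul hx.2.1 hy.2.1 (h ▸ h₁) h₂
  have := Nat.le_mul_of_pos_left (K + P) hx.2.2.1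
  have := Nat.le_mul_of_pos_left (K + P) hy.2.2.1
  have hm₁ : t₁ * (K + P) - s₁ + s₁ = t₁ * (K + P) := by omega
  have hm₂ : t₁ * (K + P) - s₁ + s₂ = t₂ * (K + P) := by omega
  obtain ⟨rfl, rfl⟩ := Nat.eq_and_eq_of_add_eq_mul hx.1 hy.1 hm₁ hm₂
  rfl

theorem ncard_notMem_closure_generators (hP : 0 < P) (hN : 0 < N) :
    {n | n ∉ AddSubmonoid.closure (generators P N K)}.ncard =
      ∑ s ∈ range (K + P), ∑ j ∈ range N, (s + j - 1) / P := by
  have hgaps : {n | n ∉ AddSubmonoid.closure (generators P N K)} =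
      gapOf P N K '' gapIndex P N K := by
    ext n
    rw [Set.mem_ofPred_eq, notMem_closure_generators_iff hP hN]
    constructor
    · rintro ⟨s, j, t, hs, hj, ht, hst, hn⟩
      have hx : ⟨(s, j), t⟩ ∈ gapIndex P N K := (mem_gapIndex hP).2 ⟨hs, hj, ht, hst⟩
      have := gapOf_add_eq hP hx
      exact ⟨_, hx, by omega⟩
    · rintro ⟨⟨⟨s, j⟩, t⟩, hx, rfl⟩
      obtain ⟨hs, hj, ht, hst⟩ := (mem_gapIndex hP).1 hx
      exact ⟨s, j, t, hs, hj, ht, hst, gapOf_add_eq hP hx⟩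
  rw [hgaps, (injOn_gapOf hP).ncard_image, Set.ncard_coe_finset, gapIndex, card_sigma,
    sum_product]
  simp only [Nat.card_Icc, Nat.add_sub_cancel]

end Counting

end SemigroupSPNK

open SemigroupSPNK

theorem stmt_1_general (P N K : ℕ) (hP : 0 < P) (hN : 0 < N) (hK : 0 < K)
    (hPN : P ∣ N - 1) (hPK : P ∣ K - 1)
    (S : AddSubmonoid ℕ)
    (hS : S = AddSubmonoid.closure
      {x : ℕ | ∃ a j : ℕ, j ≤ a ∧ a ≤ P ∧ x = K * N + a * N - j}) :
    (({n : ℕ | n ∉ S}).ncard : ℚ) =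
      ((N : ℚ) ^ 2 * K + N * K ^ 2 + N ^ 2 * P + N * K * P - 3 * N * K
        - 3 * N * P + P + 1) / (2 * P) := by
  change S = AddSubmonoid.closure (generators P N K) at hS
  subst hS
  rw [ncard_notMem_closure_generators hP hN]
  obtain ⟨L, hL⟩ := hPN
  obtain ⟨Q, hQ⟩ := hPK
  obtain rfl : N = L * P + 1 := by rw [mul_comm] at hL; omega
  obtain rfl : K = Q * P + 1 := by rw [mul_comm] at hQ; omega
  rw [show Q * P + 1 + P = (Q + 1) * P + 1 by ring, Nat.sum_range_sum_range_sub_one_div P L _ hP]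
  push_cast [Nat.cast_choose_two]
  field_simp
  ring

theorem stmt_1 (P N K : ℕ) (hP : 0 < P) (hN : 0 < N) (hK : 0 < K)
    (hPN : P ∣ N - 1) (hPK : P ∣ K - 1) (hKN : K < N)
    (S : AddSubmonoid ℕ)
    (hS : S = AddSubmonoid.closure
      {x : ℕ | ∃ a j : ℕ, j ≤ a ∧ a ≤ P ∧ x = K * N + a * N - j}) :
    (({n : ℕ | n ∉ S}).ncard : ℚ) =
      ((N : ℚ) ^ 2 * K + N * K ^ 2 + N ^ 2 * P + N * K * P - 3 * N * K
        - 3 * N * P + P + 1) / (2 * P) :=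
  stmt_1_general P N K hP hN hK hPN hPK S hS
end

section
/- Let p be prime, q = (p^b)^r with r ≥ 2, and N = (q³+1)/(q+1). Then the numerical semigroup S generated by {q³ + 1 - iN - j : i,j ≥ 0, i + j ≤ p^b} has genus (q⁵ - q³p^b - q³ + q²)/(2p^b). -/
/-!
Put `M = (q + 1) * N` (so `M = q ^ 3 + 1` and `a = p ^ b`). A sum of `n` generators is
`n * M - I * N - J` with `I + J ≤ n * a`. Every `x` has a unique representation
`x + v * N + d = u * M` with `v ≤ q` and `d < N`; reducing an arbitrary representation of `x` as a
sum of generators to this one shows, because `a ≤ q + 1`, that `x ∈ S` exactly when `v + d ≤ u * a`.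
The gaps are therefore indexed by the triples with `1 ≤ u ≤ (v + d - 1) / a`, so the genus is
`∑_{v ≤ q, d < N} ⌊(v + d - 1) / a⌋`. When `a ∣ q` and `N - 1 = q (q - 1)`, Hermite's identity
`∑_{k < a} ⌊(c + k) / a⌋ = c` evaluates this sum in closed form.
-/

open Finset

theorem Nat.eq_and_eq_of_mul_add_eq_mul_add {B P Q e d : ℕ} (he : e < B) (hd : d < B)
    (h : P * B + e = Q * B + d) : P = Q ∧ e = d := by
  have hB : 0 < B := by omega
  obtain ⟨hP, he'⟩ := (Nat.div_mod_unique (a := Q * B + d) (d := P) hB).2 ⟨by linarith, he⟩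
  obtain ⟨hQ, hd'⟩ := (Nat.div_mod_unique (a := Q * B + d) (d := Q) hB).2 ⟨by ring, hd⟩
  exact ⟨hP.symm.trans hQ, he'.symm.trans hd'⟩

theorem Nat.sum_range_add_div_self {a : ℕ} (ha : 0 < a) (c : ℕ) :
    ∑ k ∈ range a, (c + k) / a = c := by
  induction c with
  | zero =>
    exact sum_eq_zero fun k hk => by simpa using Nat.div_eq_of_lt (mem_range.1 hk)
  | succ c ih =>
    have h := sum_range_succ' (fun k => (c + k) / a) a
    rw [sum_range_succ, ih, Nat.add_div_right c ha, add_zero] at h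
    simp only [add_assoc, add_comm 1] at h ⊢
    omega

theorem Nat.sum_range_mul_add_div_s2 {a : ℕ} (ha : 0 < a) (c K : ℕ) :
    ∑ d ∈ range (a * K), (c + d) / a = K * c + a * ∑ j ∈ range K, j := by
  induction K with
  | zero => simp
  | succ K ih =>
    have hblock : ∑ k ∈ range a, (c + (a * K + k)) / a = c + a * K := by
      simp_rw [← add_assoc, add_right_comm c (a * K), Nat.add_mul_div_left _ _ ha,
        sum_add_distrib, Nat.sum_range_add_div_self ha, sum_const, card_range, smul_eq_mul]
    rw [mul_add_one, sum_range_add, ih, hblock, sum_range_succ]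
    ring

theorem sum_range_sum_range_sub_one_div {a m K : ℕ} (ha : 0 < a) :
    ∑ v ∈ range (a * m + 1), ∑ d ∈ range (a * K + 1), (v + d - 1) / a =
      a * ∑ j ∈ range m, j + K * ∑ v ∈ range (a * m + 1), v
        + (a * m + 1) * (a * ∑ j ∈ range K, j) := by
  have hinner : ∀ v, ∑ d ∈ range (a * K + 1), (v + d - 1) / a
      = (v - 1) / a + (K * v + a * ∑ j ∈ range K, j) := by
    intro v
    rw [sum_range_succ', ← Nat.sum_range_mul_add_div_s2 ha, add_comm]
    simp
  have hfirst : ∑ v ∈ range (a * m + 1), (v - 1) / a = a * ∑ j ∈ range m, j := by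
    rw [sum_range_succ']
    simpa using Nat.sum_range_mul_add_div_s2 ha 0 m
  rw [sum_congr rfl fun v _ => hinner v, sum_add_distrib, sum_add_distrib, hfirst, ← mul_sum,
    sum_const, card_range, smul_eq_mul, add_assoc]

theorem Finset.sum_range_natCast {R : Type*} [Field R] [CharZero R] (n : ℕ) :
    ∑ i ∈ range n, (i : R) = n * (n - 1) / 2 := by
  induction n with
  | zero => simp
  | succ n ih => rw [sum_range_succ, ih]; push_cast; ring

theorem Nat.pow_three_add_one (q : ℕ) : q ^ 3 + 1 = (q + 1) * (q * (q - 1) + 1) := by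
  rcases q with _ | q
  · rfl
  · simp only [Nat.add_sub_cancel]
    ring

def triangleSemigroup (a q N : ℕ) : AddSubmonoid ℕ :=
  AddSubmonoid.closure {x | ∃ i j, i + j ≤ a ∧ x = (q + 1) * N - i * N - j}

namespace triangleSemigroup

variable {a q N : ℕ}

theorem mul_add_le_of_add_le (ha : a ≤ q + 1) (hN : 0 < N) {i j : ℕ} (hij : i + j ≤ a) :
    i * N + j ≤ (q + 1) * N :=
  calc i * N + j ≤ (i + j) * N := by nlinarith
    _ ≤ (q + 1) * N := Nat.mul_le_mul_right _ (by omega)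

theorem exists_mem_add_eq (ha : a ≤ q + 1) (hN : 0 < N) {n I J : ℕ} (hIJ : I + J ≤ n * a) :
    ∃ s ∈ triangleSemigroup a q N, s + I * N + J = n * ((q + 1) * N) := by
  induction n generalizing I J with
  | zero => exact ⟨0, zero_mem _, by simp_all⟩
  | succ n ih =>
    set i := min I a
    set j := min J (a - i)
    have hij : i + j ≤ a := by omega
    obtain ⟨s, hs, hsum⟩ := ih (I := I - i) (J := J - j) (by rw [add_one_mul] at hIJ; omega)
    have hI : (I - i) * N + i * N = I * N := by rw [← add_mul, Nat.sub_add_cancel (by omega)]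
    have hle := mul_add_le_of_add_le ha hN hij
    refine ⟨s + ((q + 1) * N - i * N - j),
      add_mem hs (AddSubmonoid.subset_closure ⟨i, j, hij, rfl⟩), ?_⟩
    have := add_one_mul n ((q + 1) * N)
    omega

theorem mem_iff (ha : a ≤ q + 1) (hN : 0 < N) {x : ℕ} :
    x ∈ triangleSemigroup a q N ↔
      ∃ n I J, I + J ≤ n * a ∧ x + I * N + J = n * ((q + 1) * N) := by
  constructor
  · intro hx
    induction hx using AddSubmonoid.closure_induction with
    | mem y hy =>
      obtain ⟨i, j, hij, rfl⟩ := hy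
      have := mul_add_le_of_add_le ha hN hij
      exact ⟨1, i, j, by omega, by omega⟩
    | zero => exact ⟨0, 0, 0, by simp⟩
    | add y z _ _ ihy ihz =>
      obtain ⟨n₁, I₁, J₁, h₁, e₁⟩ := ihy
      obtain ⟨n₂, I₂, J₂, h₂, e₂⟩ := ihz
      exact ⟨n₁ + n₂, I₁ + I₂, J₁ + J₂, by rw [add_mul]; omega, by linarith⟩
  · rintro ⟨n, I, J, hIJ, hx⟩
    obtain ⟨s, hs, hsum⟩ := exists_mem_add_eq ha hN hIJ
    rwa [show x = s by omega]

theorem exists_add_mul_add_eq (hN : 0 < N) (x : ℕ) :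
    ∃ u v d, v ≤ q ∧ d < N ∧ x + v * N + d = u * ((q + 1) * N) := by
  set M := (q + 1) * N
  have hM0 : 0 < M := by positivity
  obtain ⟨u, y, hy, hxy⟩ : ∃ u y, y < M ∧ x + y = u * M := by
    have hdiv := Nat.div_add_mod' x M
    rcases Nat.eq_zero_or_pos (x % M) with h | h
    · exact ⟨x / M, 0, hM0, by omega⟩
    · have := Nat.mod_lt x hM0
      exact ⟨x / M + 1, M - x % M, by omega, by rw [add_one_mul]; omega⟩
  refine ⟨u, y / N, y % N, ?_, Nat.mod_lt _ hN, by rw [add_assoc, Nat.div_add_mod']; exact hxy⟩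
  exact Nat.lt_succ_iff.1 ((Nat.div_lt_iff_lt_mul hN).2 hy)

theorem eq_of_add_mul_add_eq {x u₁ v₁ d₁ u₂ v₂ d₂ : ℕ} (hv₁ : v₁ ≤ q) (hd₁ : d₁ < N)
    (hv₂ : v₂ ≤ q) (hd₂ : d₂ < N) (h₁ : x + v₁ * N + d₁ = u₁ * ((q + 1) * N))
    (h₂ : x + v₂ * N + d₂ = u₂ * ((q + 1) * N)) : u₁ = u₂ ∧ v₁ = v₂ ∧ d₁ = d₂ := by
  obtain ⟨hP, rfl⟩ := Nat.eq_and_eq_of_mul_add_eq_mul_add hd₁ hd₂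
    (by linarith : (v₁ + u₂ * (q + 1)) * N + d₁ = (v₂ + u₁ * (q + 1)) * N + d₂)
  obtain ⟨rfl, rfl⟩ := Nat.eq_and_eq_of_mul_add_eq_mul_add (Nat.lt_succ_of_le hv₂)
    (Nat.lt_succ_of_le hv₁) (by omega : u₁ * (q + 1) + v₂ = u₂ * (q + 1) + v₁)
  exact ⟨rfl, rfl, rfl⟩

theorem mem_iff_le (ha : a ≤ q + 1) (hN : 0 < N) {x u v d : ℕ} (hv : v ≤ q) (hd : d < N)
    (hx : x + v * N + d = u * ((q + 1) * N)) :
    x ∈ triangleSemigroup a q N ↔ v + d ≤ u * a := by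
  refine ⟨fun hmem => ?_, fun hle => (mem_iff ha hN).2 ⟨u, v, d, hle, hx⟩⟩
  obtain ⟨n, I, J, hIJ, hx'⟩ := (mem_iff ha hN).1 hmem
  have hJ := Nat.div_add_mod' J N
  obtain ⟨hcoeff, rfl⟩ := Nat.eq_and_eq_of_mul_add_eq_mul_add (Nat.mod_lt J hN) hd
    (by linarith : (I + J / N + u * (q + 1)) * N + J % N = (v + n * (q + 1)) * N + d)
  obtain ⟨k, rfl⟩ : ∃ k, n = u + k := by
    refine Nat.exists_eq_add_of_le (Nat.le_of_not_lt fun hnu => ?_)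
    have := Nat.mul_le_mul_right (q + 1) (Nat.succ_le_of_lt hnu)
    rw [Nat.succ_mul] at this
    linarith [Nat.zero_le (J / N)]
  -- `v + d = I + J / N + J % N - k * (q + 1) ≤ I + J - k * (q + 1) ≤ (u + k) * a - k * (q + 1)`
  have : J / N ≤ J / N * N := Nat.le_mul_of_pos_right _ hN
  nlinarith [Nat.mul_le_mul_left k ha]

theorem sub_sub_add_add_cancel {u v d : ℕ} (hu : 1 ≤ u) (hv : v ≤ q) (hd : d < N) :
    u * ((q + 1) * N) - v * N - d + v * N + d = u * ((q + 1) * N) := by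
  have h₁ : v * N ≤ q * N := Nat.mul_le_mul_right N hv
  have h₂ : (q + 1) * N ≤ u * ((q + 1) * N) := Nat.le_mul_of_pos_left _ hu
  have h₃ := add_one_mul q N
  omega

theorem ncard_gaps (ha₀ : 0 < a) (ha : a ≤ q + 1) (hN : 0 < N) :
    {x | x ∉ triangleSemigroup a q N}.ncard =
      ∑ v ∈ range (q + 1), ∑ d ∈ range N, (v + d - 1) / a := by
  set T : Finset (Σ _ : ℕ × ℕ, ℕ) :=
    (range (q + 1) ×ˢ range N).sigma fun w => Icc 1 ((w.1 + w.2 - 1) / a)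
  have hT : ∀ {v d u : ℕ}, ⟨(v, d), u⟩ ∈ T ↔ v ≤ q ∧ d < N ∧ 1 ≤ u ∧ u * a < v + d := by
    intro v d u
    simp only [T, mem_sigma, mem_product, mem_range, mem_Icc, Nat.le_div_iff_mul_le ha₀]
    have : u ≤ u * a := Nat.le_mul_of_pos_right u ha₀
    omega
  set φ : (Σ _ : ℕ × ℕ, ℕ) → ℕ := fun t => t.2 * ((q + 1) * N) - t.1.1 * N - t.1.2
  have hgaps : {x | x ∉ triangleSemigroup a q N} = φ '' T := by
    ext x
    constructor
    · intro hx
      obtain ⟨u, v, d, hv, hd, hsum⟩ := exists_add_mul_add_eq hN x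
      have hlt : u * a < v + d := not_le.1 fun h => hx ((mem_iff_le ha hN hv hd hsum).2 h)
      have hu : 1 ≤ u := Nat.one_le_iff_ne_zero.2 fun hu => by simp_all
      exact ⟨⟨(v, d), u⟩, hT.2 ⟨hv, hd, hu, hlt⟩, by simp only [φ]; omega⟩
    · rintro ⟨⟨⟨v, d⟩, u⟩, ht, rfl⟩
      obtain ⟨hv, hd, hu, hlt⟩ := hT.1 ht
      exact fun hmem =>
        hlt.not_ge ((mem_iff_le ha hN hv hd (sub_sub_add_add_cancel hu hv hd)).1 hmem)
  have hinj : Set.InjOn φ T := by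
    rintro ⟨⟨v₁, d₁⟩, u₁⟩ ht₁ ⟨⟨v₂, d₂⟩, u₂⟩ ht₂ heq
    obtain ⟨hv₁, hd₁, hu₁, -⟩ := hT.1 ht₁
    obtain ⟨hv₂, hd₂, hu₂, -⟩ := hT.1 ht₂
    have h₂ := sub_sub_add_add_cancel hu₂ hv₂ hd₂
    simp only [φ] at heq
    rw [← heq] at h₂
    obtain ⟨rfl, rfl, rfl⟩ :=
      eq_of_add_mul_add_eq hv₁ hd₁ hv₂ hd₂ (sub_sub_add_add_cancel hu₁ hv₁ hd₁) h₂
    rfl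
  rw [hgaps, hinj.ncard_image, Set.ncard_coe_finset, card_sigma, sum_product]
  simp

theorem ncard_gaps_of_dvd {a q : ℕ} (ha : 0 < a) (hq : 0 < q) (haq : a ∣ q) :
    ({x | x ∉ triangleSemigroup a q (q * (q - 1) + 1)}.ncard : ℚ) =
      ((q : ℚ) ^ 5 - q ^ 3 * a - q ^ 3 + q ^ 2) / (2 * a) := by
  obtain ⟨m, rfl⟩ := haq
  have hm : 1 ≤ m := Nat.one_le_iff_ne_zero.2 (right_ne_zero_of_mul hq.ne')
  have hN : a * m * (a * m - 1) + 1 = a * (m * (a * m - 1)) + 1 := by ring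
  rw [hN, ncard_gaps ha (by nlinarith) (by omega), sum_range_sum_range_sub_one_div ha]
  push_cast [Nat.one_le_iff_ne_zero.2 (mul_ne_zero ha.ne' (by omega : m ≠ 0)), sum_range_natCast]
  field_simp
  ring

end triangleSemigroup

theorem stmt_2_general (p b r : ℕ) (hp : p.Prime) (hr : 2 ≤ r)
    (q N : ℕ) (hq : q = (p ^ b) ^ r) (hN : N = (q ^ 3 + 1) / (q + 1))
    (S : AddSubmonoid ℕ)
    (hS : S = AddSubmonoid.closure
      {x : ℕ | ∃ i j : ℕ, i + j ≤ p ^ b ∧ x = q ^ 3 + 1 - i * N - j}) :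
    (({n : ℕ | n ∉ S}).ncard : ℚ) =
      ((q : ℚ) ^ 5 - q ^ 3 * p ^ b - q ^ 3 + q ^ 2) / (2 * p ^ b) := by
  have ha : 0 < p ^ b := pow_pos hp.pos b
  have hN' : N = q * (q - 1) + 1 := by
    rw [hN, Nat.pow_three_add_one, Nat.mul_div_cancel_left _ q.succ_pos]
  have hcube : q ^ 3 + 1 = (q + 1) * N := hN' ▸ Nat.pow_three_add_one q
  have hS' : S = triangleSemigroup (p ^ b) q N := by rw [hS, hcube, triangleSemigroup]
  rw [hS', hN', triangleSemigroup.ncard_gaps_of_dvd ha (hq ▸ pow_pos ha r)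
    (hq ▸ dvd_pow_self _ (by omega))]
  push_cast
  rfl

theorem stmt_2 (p b r : ℕ) (hp : p.Prime) (hb : 0 < b) (hr : 2 ≤ r)
    (q N : ℕ) (hq : q = (p ^ b) ^ r) (hN : N = (q ^ 3 + 1) / (q + 1))
    (S : AddSubmonoid ℕ)
    (hS : S = AddSubmonoid.closure
      {x : ℕ | ∃ i j : ℕ, i + j ≤ p ^ b ∧ x = q ^ 3 + 1 - i * N - j}) :
    (({n : ℕ | n ∉ S}).ncard : ℚ) =
      ((q : ℚ) ^ 5 - q ^ 3 * p ^ b - q ^ 3 + q ^ 2) / (2 * p ^ b) :=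
  stmt_2_general p b r hp hr q N hq hN S hS
end

section
/- Let p be prime, q = (p^b)^r with r ≥ 2, N = (q³+1)/(q+1), K = q+1-p^b, P = p^b. Then the conductor of the numerical semigroup S = ⟨q³+1-iN-j : 0 ≤ i+j ≤ p^b⟩ equals (q⁵ - 2q³p^b + q²p^{2b} - q²p^b - qp^{2b} + q² + qp^b + p^{2b} - p^b)/p^b. -/
/-!
Put `K = q + 1 - P` and `N = q² - q + 1`, so that `(q + 1) N = q³ + 1`. The generators of `S` are
then the numbers `aN - j` with `j + K ≤ a ≤ q + 1`, and `n ∈ S` exactly when `n + J = AN` for some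
`m, A, J` with `J + mK ≤ A ≤ m(q + 1)` (a sum of `m` generators).

Let `m₀ = q²/P - 1` and `A₀ = m₀K + N - 2`. For `m ≥ m₀` the windows `[mK + N - 1, m(q + 1)]` of
admissible `A` overlap, so every `n > F = A₀N - (N - 1)` lies in `S`. The number `F` itself does
not: with `A = A₀` the slack `J = N - 1` forces `m < m₀`, too few generators to reach `A₀`, and with
`A > A₀` the slack `J ≥ 2N - 1` is too large for `(q + 1) J ≤ A P`, a consequence of
`J + mK ≤ A ≤ m(q + 1)`.
-/

def shiftedMultiples (L K N : ℕ) : Set ℕ :=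
  {x | ∃ a j, j + K ≤ a ∧ a ≤ L ∧ x + j = a * N}

theorem FrobeniusNumber.isLeast_conductor {F : ℕ} {s : Set ℕ} (h : FrobeniusNumber F s) :
    IsLeast {c | ∀ n, c ≤ n → n ∈ AddSubmonoid.closure s} (F + 1) := by
  rw [frobeniusNumber_iff] at h
  refine ⟨fun n hn => h.2 n hn, fun c hc => ?_⟩
  by_contra! hlt
  exact h.1 (hc F (by omega))

theorem exists_add_lt_eq_mul {N : ℕ} (hN : 0 < N) (n : ℕ) :
    ∃ A J, J < N ∧ n + J = A * N := by
  induction n with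
  | zero => exact ⟨0, 0, hN, by simp⟩
  | succ n ih =>
    obtain ⟨A, J, hJ, h⟩ := ih
    rcases J with _ | J
    · exact ⟨A + 1, N - 1, by omega, by rw [add_one_mul]; omega⟩
    · exact ⟨A, J, by omega, by omega⟩

section Closure

variable {L K N : ℕ}

theorem setOf_sub_mul_sub_eq_shiftedMultiples {P : ℕ} (hN : 0 < N) :
    {x | ∃ i j, i + j ≤ P ∧ x = (K + P) * N - i * N - j} = shiftedMultiples (K + P) K N := by
  ext x
  constructor
  · rintro ⟨i, j, hij, rfl⟩
    have hsplit : (K + P - i) * N + i * N = (K + P) * N := by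
      rw [← add_mul, Nat.sub_add_cancel (by omega)]
    have hj : j ≤ (K + P - i) * N := le_trans (by omega) (Nat.le_mul_of_pos_right _ hN)
    exact ⟨K + P - i, j, by omega, by omega, by omega⟩
  · rintro ⟨a, j, hja, haL, hx⟩
    have hsplit : (K + P - a) * N + a * N = (K + P) * N := by
      rw [← add_mul, Nat.sub_add_cancel haL]
    exact ⟨K + P - a, j, by omega, by omega⟩

theorem mul_sub_mem_closure_shiftedMultiples (hN : 0 < N) {m A J : ℕ} (hA : A ≤ m * L)
    (hJ : J + m * K ≤ A) : A * N - J ∈ AddSubmonoid.closure (shiftedMultiples L K N) := by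
  induction m generalizing A J with
  | zero =>
    obtain rfl : A = 0 := by simpa using hA
    simp
  | succ m ih =>
    rw [add_one_mul] at hA hJ
    have hKL : K ≤ L := by
      by_contra! h
      have := Nat.mul_le_mul_left m h.le
      omega
    obtain ⟨a, ha⟩ : ∃ a, a = min (A - m * K) L := ⟨_, rfl⟩
    obtain ⟨j, hj⟩ : ∃ j, j = min J (a - K) := ⟨_, rfl⟩
    have haN : a ≤ a * N := Nat.le_mul_of_pos_right a hN
    have hrestN : A - a ≤ (A - a) * N := Nat.le_mul_of_pos_right _ hN
    have hsplit : a * N + (A - a) * N = A * N := by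
      rw [← add_mul, Nat.add_sub_cancel' (by omega)]
    have hmKL : m * K ≤ m * L := Nat.mul_le_mul_left m hKL
    rw [show A * N - J = (a * N - j) + ((A - a) * N - (J - j)) by omega]
    exact add_mem (AddSubmonoid.subset_closure ⟨a, j, by omega, by omega, by omega⟩)
      (ih (by omega) (by omega))

theorem mem_closure_shiftedMultiples_iff (hN : 0 < N) {n : ℕ} :
    n ∈ AddSubmonoid.closure (shiftedMultiples L K N) ↔
      ∃ m A J, A ≤ m * L ∧ J + m * K ≤ A ∧ n + J = A * N := by
  constructor
  · intro hn
    induction hn using AddSubmonoid.closure_induction with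
    | mem x hx =>
      obtain ⟨a, j, hja, haL, hx⟩ := hx
      exact ⟨1, a, j, by omega, by omega, hx⟩
    | zero => exact ⟨0, 0, 0, by simp, by simp, by simp⟩
    | add x y _ _ hx hy =>
      obtain ⟨m, A, J, hA, hJ, hxJ⟩ := hx
      obtain ⟨m', A', J', hA', hJ', hyJ⟩ := hy
      refine ⟨m + m', A + A', J + J', ?_, ?_, ?_⟩ <;> simp only [add_mul] <;> omega
  · rintro ⟨m, A, J, hA, hJ, hnJ⟩
    rw [show n = A * N - J by omega]
    exact mul_sub_mem_closure_shiftedMultiples hN hA hJ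

end Closure

theorem exists_mul_add_le_le_mul {K P D m₀ A : ℕ} (hK : 0 < K)
    (hstep : K + D ≤ m₀ * P + 1) (hA : m₀ * K + D ≤ A) :
    ∃ m, m * K + D ≤ A ∧ A ≤ m * (K + P) := by
  suffices ∃ m, m₀ ≤ m ∧ m * K + D ≤ A ∧ A ≤ m * (K + P) by
    obtain ⟨m, -, h⟩ := this
    exact ⟨m, h⟩
  induction A, hA using Nat.le_induction with
  | base => exact ⟨m₀, le_rfl, le_rfl, by rw [mul_add]; omega⟩
  | succ A hA ih =>
    obtain ⟨m, hm, hlow, hup⟩ := ih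
    by_cases h : A + 1 ≤ m * (K + P)
    · exact ⟨m, hm, by omega, h⟩
    · have := Nat.mul_le_mul_right P hm
      rw [mul_add] at hup h
      refine ⟨m + 1, by omega, ?_, ?_⟩
      · rw [add_one_mul]
        omega
      · rw [add_one_mul, mul_add]
        omega

section Frobenius

variable {K P N m₀ : ℕ}

theorem mem_closure_shiftedMultiples_of_lt {n : ℕ} (hK : 0 < K) (hN : 2 ≤ N)
    (hm₀ : K + N = m₀ * P + 2) (hn : (m₀ * K + N - 3) * N + 1 < n) :
    n ∈ AddSubmonoid.closure (shiftedMultiples (K + P) K N) := by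
  have hm₀K : 0 < m₀ * K := Nat.mul_pos (Nat.pos_of_ne_zero (by rintro rfl; omega)) hK
  have hF : (m₀ * K + N - 3) * N + N = (m₀ * K + N - 2) * N := by
    rw [← add_one_mul, show m₀ * K + N - 3 + 1 = m₀ * K + N - 2 by omega]
  obtain ⟨A, J, hJ, hnJ⟩ := exists_add_lt_eq_mul (by omega : 0 < N) n
  rw [mem_closure_shiftedMultiples_iff (by omega)]
  obtain rfl | hA : m₀ * K + N - 2 = A ∨ m₀ * K + N - 2 < A := by
    have := Nat.lt_of_mul_lt_mul_right (a := N) (show (m₀ * K + N - 3) * N < A * N by omega)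
    omega
  · exact ⟨m₀, _, J, by rw [mul_add]; omega, by omega, hnJ⟩
  · obtain ⟨m, hm, hAm⟩ := exists_mul_add_le_le_mul (P := P) (D := N - 1) hK (by omega)
      (show m₀ * K + (N - 1) ≤ A by omega)
    exact ⟨m, A, J, hAm, by omega, hnJ⟩

theorem notMem_closure_shiftedMultiples (hK : 0 < K) (hP : 0 < P) (hKN : K ≤ N) (hN : 2 ≤ N)
    (hm₀ : K + N = m₀ * P + 2) :
    (m₀ * K + N - 3) * N + 1 ∉ AddSubmonoid.closure (shiftedMultiples (K + P) K N) := by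
  have hm₀K : 0 < m₀ * K := Nat.mul_pos (Nat.pos_of_ne_zero (by rintro rfl; omega)) hK
  have hF : (m₀ * K + N - 3) * N + N = (m₀ * K + N - 2) * N := by
    rw [← add_one_mul, show m₀ * K + N - 3 + 1 = m₀ * K + N - 2 by omega]
  rw [mem_closure_shiftedMultiples_iff (by omega)]
  rintro ⟨m, A, J, hAm, hJm, hFJ⟩
  obtain rfl | hA : m₀ * K + N - 2 = A ∨ m₀ * K + N - 2 < A := by
    have := Nat.lt_of_mul_lt_mul_right (a := N) (show (m₀ * K + N - 3) * N < A * N by omega)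
    omega
  · have hm : m + 1 ≤ m₀ := by
      by_contra! h
      have := Nat.mul_le_mul_right K (show m₀ ≤ m by omega)
      omega
    have := Nat.mul_le_mul_right (K + P) hm
    rw [add_one_mul, mul_add m₀] at this
    omega
  · have hslack : (K + P) * J ≤ A * P := by nlinarith
    obtain ⟨t, ht⟩ : ∃ t, A + 1 = m₀ * K + N + t := ⟨A + 1 - (m₀ * K + N), by omega⟩
    have hJ : J + 1 = (t + 2) * N := by
      have hAN : A * N = (m₀ * K + N - 2) * N + (t + 1) * N := by
        rw [← add_mul]
        congr 1
        omega
      have : (t + 2) * N = (t + 1) * N + N := by ring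
      omega
    zify at hslack hJ ht hm₀ hKN hK
    have key : ((K : ℤ) + P) * J - A * P =
        K * t * N + K * (N - K) + K + t * P * (N - 1) + P * N := by
      linear_combination ((K : ℤ) + P) * hJ - P * ht + K * hm₀
    have hN1 : (0 : ℤ) ≤ N - 1 := by linarith
    have hK0 : (0 : ℤ) ≤ K := K.cast_nonneg
    have ht0 : (0 : ℤ) ≤ t := t.cast_nonneg
    have hP0 : (0 : ℤ) ≤ P := P.cast_nonneg
    have hN0 : (0 : ℤ) ≤ N := N.cast_nonneg
    linarith [mul_nonneg (mul_nonneg hK0 ht0) hN0, mul_nonneg hK0 (sub_nonneg.2 hKN),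
      mul_nonneg (mul_nonneg ht0 hP0) hN1, mul_nonneg hP0 hN0]

theorem frobeniusNumber_shiftedMultiples (hK : 0 < K) (hP : 0 < P) (hKN : K ≤ N)
    (hN : 2 ≤ N) (hm₀ : K + N = m₀ * P + 2) :
    FrobeniusNumber ((m₀ * K + N - 3) * N + 1) (shiftedMultiples (K + P) K N) :=
  frobeniusNumber_iff.2 ⟨notMem_closure_shiftedMultiples hK hP hKN hN hm₀,
    fun _ hn => mem_closure_shiftedMultiples_of_lt hK hN hm₀ hn⟩

end Frobenius

theorem frobeniusNumber_sub_mul_sub {q P m₀ N : ℕ} (hq : 2 ≤ q) (hP : 0 < P)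
    (hPq : P ≤ q) (hm₀ : (m₀ + 1) * P = q ^ 2) (hN : (q + 1) * N = q ^ 3 + 1) :
    FrobeniusNumber ((m₀ * (q + 1 - P) + N - 3) * N + 1)
      {x | ∃ i j, i + j ≤ P ∧ x = q ^ 3 + 1 - i * N - j} := by
  have hqq : 2 * q ≤ q ^ 2 := by nlinarith
  have hNq : N = q ^ 2 - q + 1 := Nat.eq_of_mul_eq_mul_left q.succ_pos <| hN.trans <| by
    zify [(by omega : q ≤ q ^ 2)]
    ring
  have hS : {x | ∃ i j, i + j ≤ P ∧ x = q ^ 3 + 1 - i * N - j} =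
      shiftedMultiples (q + 1 - P + P) (q + 1 - P) N := by
    rw [← setOf_sub_mul_sub_eq_shiftedMultiples (by omega), Nat.sub_add_cancel (by omega), hN]
  rw [hS]
  exact frobeniusNumber_shiftedMultiples (by omega) hP (by omega) (by omega)
    (by rw [add_one_mul] at hm₀; omega)

theorem cast_conductor_mul {q P m₀ N : ℕ} (hq : 2 ≤ q) (hPq : P ≤ q)
    (hm₀ : (m₀ + 1) * P = q ^ 2) (hN : (q + 1) * N = q ^ 3 + 1) :
    (((m₀ * (q + 1 - P) + N - 3) * N + 1 + 1 : ℕ) : ℚ) * P = (q : ℚ) ^ 5 - 2 * q ^ 3 * P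
      + q ^ 2 * P ^ 2 - q ^ 2 * P - q * P ^ 2 + q ^ 2 + q * P + P ^ 2 - P := by
  have hNQ : (N : ℚ) = q ^ 2 - q + 1 := by
    have : ((q : ℚ) + 1) * N = (q + 1) * (q ^ 2 - q + 1) := by
      rw [show ((q : ℚ) + 1) * (q ^ 2 - q + 1) = q ^ 3 + 1 by ring]
      exact_mod_cast hN
    exact mul_left_cancel₀ (by positivity) this
  have h3 : 3 ≤ N := by
    by_contra! h
    have := Nat.mul_le_mul_left (q + 1) (show N ≤ 2 by omega)
    nlinarith
  have hm₀Q : ((m₀ : ℚ) + 1) * P = q ^ 2 := by exact_mod_cast hm₀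
  push_cast [Nat.cast_sub h3, Nat.cast_sub (show P ≤ q + 1 by omega),
    Nat.cast_sub (show 3 ≤ m₀ * (q + 1 - P) + N by omega)]
  rw [hNQ]
  linear_combination ((q : ℚ) + 1 - P) * (q ^ 2 - q + 1) * hm₀Q

theorem stmt_3 (p b r : ℕ) (hp : p.Prime) (hb : 0 < b) (hr : 2 ≤ r)
    (q N : ℕ) (hq : q = (p ^ b) ^ r) (hN : N = (q ^ 3 + 1) / (q + 1))
    (S : AddSubmonoid ℕ)
    (hS : S = AddSubmonoid.closure
      {x : ℕ | ∃ i j : ℕ, i + j ≤ p ^ b ∧ x = q ^ 3 + 1 - i * N - j}) :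
    ∃ C : ℕ, IsLeast {c : ℕ | ∀ n : ℕ, c ≤ n → n ∈ S} C ∧
      (C : ℚ) = ((q : ℚ) ^ 5 - 2 * q ^ 3 * p ^ b + q ^ 2 * p ^ (2 * b)
        - q ^ 2 * p ^ b - q * p ^ (2 * b) + q ^ 2 + q * p ^ b
        + p ^ (2 * b) - p ^ b) / p ^ b := by
  obtain ⟨s, rfl⟩ : ∃ s, r = s + 1 := ⟨r - 1, by omega⟩
  set P := p ^ b with hP
  have hP2 : 2 ≤ P := hp.two_le.trans (Nat.le_self_pow hb.ne' p)
  have hqP : q = P * P ^ s := by rw [hq, pow_succ']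
  have hPq : P ≤ q := hqP ▸ Nat.le_mul_of_pos_right P (by positivity)
  have hm₀ : (q * P ^ s - 1 + 1) * P = q ^ 2 := by
    rw [Nat.sub_add_cancel (Nat.mul_pos (by omega) (by positivity)), hqP]
    ring
  have hqN : (q + 1) * N = q ^ 3 + 1 := by
    rw [hN, Nat.mul_div_cancel' (by simpa using Odd.nat_add_dvd_pow_add_pow q 1 (by decide))]
  refine ⟨_, hS ▸ (frobeniusNumber_sub_mul_sub (by omega) (by omega) (by omega) hm₀
    hqN).isLeast_conductor, ?_⟩
  have hPQ : (p : ℚ) ^ b = P := by rw [hP, Nat.cast_pow]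
  rw [pow_mul', hPQ, eq_div_iff (by exact_mod_cast (by omega : P ≠ 0))]
  exact cast_conductor_mul (by omega) (by omega) hm₀ hqN
end

section
/- Let q = p^a with p prime, b a proper divisor of a, n ≥ 3 odd, and M = (qⁿ+1)/(q+1). Then the numerical semigroup S' generated by {qⁿ + 1 - iM - j : i,j ≥ 0, iM + jq² ≤ q^{n-1}p^b} equals the numerical semigroup generated by {k(q^{n-1} - q^{n-2}) + ℓ : q+1-p^b ≤ k ≤ q+1, q^{n-3}(q - p^b) + 1 ≤ ℓ ≤ k·(q^{n-2}+1)/(q+1)}. -/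
lemma aux_closure_top (S : Set ℕ) (h : 1 ∈ S) : AddSubmonoid.closure S = ⊤ := by
  rw [eq_top_iff]
  intro x _
  simpa using (AddSubmonoid.closure S).nsmul_mem (AddSubmonoid.subset_closure h) x

lemma aux_dvd_pow_add_one (q t : ℕ) (h : Odd t) : (q + 1) ∣ q ^ t + 1 := by
  have h1 : ((q : ℤ) + 1) ∣ (q : ℤ) ^ t + 1 := by
    simpa using Odd.add_dvd_pow_add_pow (q : ℤ) 1 h
  have h2 : ((q + 1 : ℕ) : ℤ) ∣ ((q ^ t + 1 : ℕ) : ℤ) := by push_cast; exact h1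
  exact_mod_cast h2

set_option maxHeartbeats 1000000 in
theorem stmt_4 (p a b n : ℕ) (hp : p.Prime) (hb : 0 < b) (hba : b ∣ a) (hne : b ≠ a)
    (hn : 3 ≤ n) (hodd : Odd n) (q M : ℕ) (hq : q = p ^ a)
    (hM : M = (q ^ n + 1) / (q + 1)) :
    AddSubmonoid.closure
      {x : ℕ | ∃ i j : ℕ, i * M + j * q ^ 2 ≤ q ^ (n - 1) * p ^ b ∧
        x = q ^ n + 1 - i * M - j}
    = AddSubmonoid.closure
      {x : ℕ | ∃ k l : ℕ, q + 1 - p ^ b ≤ k ∧ k ≤ q + 1 ∧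
        q ^ (n - 3) * (q - p ^ b) + 1 ≤ l ∧ l ≤ k * ((q ^ (n - 2) + 1) / (q + 1)) ∧
        x = k * (q ^ (n - 1) - q ^ (n - 2)) + l} := by
  have hp2 : 2 ≤ p := hp.two_le
  have hPpos : 1 ≤ p ^ b := Nat.one_le_pow _ _ (by omega)
  have hP2 : 2 ≤ p ^ b := by
    calc 2 = 2 ^ 1 := rfl
    _ ≤ 2 ^ b := Nat.pow_le_pow_right (by omega) hb
    _ ≤ p ^ b := Nat.pow_le_pow_left hp2 b
  rcases Nat.eq_zero_or_pos a with ha | ha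
  · -- degenerate case a = 0, q = 1 : both closures are ⊤
    have hq1 : q = 1 := by rw [hq, ha, pow_zero]
    subst hq1
    have hM1 : M = 1 := by simp [hM]
    subst hM1
    rw [aux_closure_top, aux_closure_top]
    · refine ⟨2, 1, by omega, by omega, ?_, ?_, ?_⟩
      · simp only [one_pow, one_mul]; omega
      · simp only [one_pow]; norm_num
      · simp
    · refine ⟨1, 0, ?_, ?_⟩
      · simp only [one_pow, one_mul, zero_mul]; omega
      · simp
  · -- main case
    have hba' : b < a := lt_of_le_of_ne (Nat.le_of_dvd ha hba) hne
    have hq2 : 2 ≤ q := by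
      rw [hq]
      calc 2 = 2 ^ 1 := rfl
      _ ≤ 2 ^ a := Nat.pow_le_pow_right (by omega) ha
      _ ≤ p ^ a := Nat.pow_le_pow_left hp2 a
    have hPq : 2 * p ^ b ≤ q := by
      have h1 : p ^ (b + 1) ≤ p ^ a := Nat.pow_le_pow_right (by omega) (by omega)
      have h2 : 2 * p ^ b ≤ p * p ^ b := Nat.mul_le_mul_right _ hp2
      rw [hq]
      calc 2 * p ^ b ≤ p * p ^ b := h2
      _ = p ^ (b + 1) := by ring
      _ ≤ p ^ a := h1
    obtain ⟨s, rfl⟩ : ∃ s, n = s + 3 := ⟨n - 3, by omega⟩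
    have hodd1 : Odd (s + 1) := by
      rcases hodd with ⟨t, ht⟩; exact ⟨t - 1, by omega⟩
    simp only [show s + 3 - 1 = s + 2 from rfl, show s + 3 - 2 = s + 1 from rfl,
      show s + 3 - 3 = s from rfl]
    set P := p ^ b with hPdef
    set Q := q ^ s with hQdef
    set m := (q ^ (s + 1) + 1) / (q + 1) with hmdef
    have hM1 : (q + 1) * M = q ^ (s + 3) + 1 := by
      rw [hM]; exact Nat.mul_div_cancel' (aux_dvd_pow_add_one q (s + 3) hodd)
    have hm1 : (q + 1) * m = q ^ (s + 1) + 1 := by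
      rw [hmdef]; exact Nat.mul_div_cancel' (aux_dvd_pow_add_one q (s + 1) hodd1)
    have hQpos : 1 ≤ Q := Nat.one_le_pow _ _ (by omega)
    have pw1 : q ^ (s + 1) = Q * q := by rw [hQdef, pow_succ]
    have pw2 : q ^ (s + 2) = Q * q * q := by rw [hQdef, pow_succ, pow_succ]
    have pw3 : q ^ (s + 3) = Q * q * q * q := by rw [hQdef, pow_succ, pow_succ, pow_succ]
    clear_value P Q m
    have cancel : ∀ x y : ℕ, (q + 1) * x = (q + 1) * y → x = y := fun x y h =>
      Nat.eq_of_mul_eq_mul_left (by omega) h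
    have hM1' : (q + 1) * M = Q * q * q * q + 1 := by rw [hM1, pw3]
    have hm1' : (q + 1) * m = Q * q + 1 := by rw [hm1, pw1]
    have F1 : M + q = m * (q * q) + 1 := by
      apply cancel
      calc (q + 1) * (M + q) = (q + 1) * M + (q + 1) * q := by ring
      _ = Q * q * q * q + 1 + (q + 1) * q := by rw [hM1']
      _ = ((q + 1) * m) * (q * q) + (q + 1) := by rw [hm1']; ring
      _ = (q + 1) * (m * (q * q) + 1) := by ring
    have F2 : M + Q * q = Q * q * q + m := by
      apply cancel
      calc (q + 1) * (M + Q * q) = (q + 1) * M + (q + 1) * (Q * q) := by ring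
      _ = Q * q * q * q + 1 + (q + 1) * (Q * q) := by rw [hM1']
      _ = ((q + 1) * m) + (Q * q * q * q + Q * q * q) := by rw [hm1']; ring
      _ = (q + 1) * (Q * q * q + m) := by ring
    have hmQ : m ≤ Q := by
      have h1 : (q + 1) * Q = Q * q + Q := by ring
      have h2 : (q + 1) * m ≤ (q + 1) * Q := by omega
      exact Nat.le_of_mul_le_mul_left h2 (by omega)
    have hmpos : 1 ≤ m := by
      rcases Nat.eq_zero_or_pos m with h | h
      · rw [h] at hm1'; omega
      · exact h
    have hQq : Q * q ≤ Q * q * q := Nat.le_mul_of_pos_right _ (by omega)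
    have hDM : q ^ (s + 2) - q ^ (s + 1) + m = M := by rw [pw1, pw2]; omega
    have hqP : Q * (q - P) + Q * P = Q * q := by
      rw [← Nat.mul_add, Nat.sub_add_cancel (by omega)]
    suffices hset : {x : ℕ | ∃ i j : ℕ, i * M + j * q ^ 2 ≤ q ^ (s + 2) * P ∧
        x = q ^ (s + 3) + 1 - i * M - j}
      = {x : ℕ | ∃ k l : ℕ, q + 1 - P ≤ k ∧ k ≤ q + 1 ∧
        Q * (q - P) + 1 ≤ l ∧ l ≤ k * m ∧
        x = k * (q ^ (s + 2) - q ^ (s + 1)) + l} by rw [hset]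
    ext x
    simp only [Set.mem_setOf_eq]
    constructor
    · rintro ⟨i, j, hij, rfl⟩
      have hij' : i * M + j * (q * q) ≤ Q * q * q * P := by
        have e : j * q ^ 2 = j * (q * q) := by ring
        rw [pw2] at hij; omega
      -- step 1 : i ≤ P
      have C1 : i ≤ P := by
        by_contra hi
        push_neg at hi
        have h1 : (P + 1) * M ≤ Q * q * q * P := by
          calc (P + 1) * M ≤ i * M := Nat.mul_le_mul_right M (by omega)
          _ ≤ Q * q * q * P := by omega
        have h2 : (q + 1) * ((P + 1) * M) ≤ (q + 1) * (Q * q * q * P) :=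
          Nat.mul_le_mul_left _ h1
        rw [show (q + 1) * ((P + 1) * M) = (P + 1) * ((q + 1) * M) from by ring, hM1'] at h2
        have h7 : Q * q * q * (P + 1) ≤ Q * q * q * q := Nat.mul_le_mul_left _ (by omega)
        have e1 : (P + 1) * (Q * q * q * q + 1) = P * (Q * q * q * q) + Q * q * q * q + P + 1 := by
          ring
        have e2 : (q + 1) * (Q * q * q * P) = P * (Q * q * q * q) + Q * q * q * P := by ring
        have e4 : Q * q * q * (P + 1) = Q * q * q * P + Q * q * q := by ring
        have hD1 : 0 < Q * q * q := Nat.mul_pos (Nat.mul_pos (by omega) (by omega)) (by omega)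
        omega
      -- step 2 : j + i*m ≤ Q*P
      have key : (j + i * m) * (q * q) + i = j * (q * q) + i * M + i * q := by
        calc (j + i * m) * (q * q) + i = j * (q * q) + i * (m * (q * q) + 1) := by ring
        _ = j * (q * q) + i * (M + q) := by rw [← F1]
        _ = j * (q * q) + i * M + i * q := by ring
      have h3 : i * q ≤ P * q := Nat.mul_le_mul_right q C1
      have h5 : P * q < q * q := mul_lt_mul_of_pos_right (by omega) (by omega)
      have C2 : j + i * m ≤ Q * P := by
        have e5 : (Q * P + 1) * (q * q) = Q * q * q * P + q * q := by ring
        have h6 : (j + i * m) * (q * q) < (Q * P + 1) * (q * q) := by omega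
        have := lt_of_mul_lt_mul_right h6 (Nat.zero_le _)
        omega
      -- the witnesses
      have hkm : (q + 1 - i) * m + i * m = Q * q + 1 := by
        rw [← Nat.add_mul, Nat.sub_add_cancel (by omega), hm1']
      have hQPQq : Q * P ≤ Q * q := Nat.mul_le_mul_left Q (by omega)
      have hjkm : j ≤ (q + 1 - i) * m := by omega
      refine ⟨q + 1 - i, (q + 1 - i) * m - j, by omega, by omega, by omega, by omega, ?_⟩
      have hkM : (q + 1 - i) * M + i * M = q ^ (s + 3) + 1 := by
        rw [← Nat.add_mul, Nat.sub_add_cancel (by omega), hM1]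
      have hkD : (q + 1 - i) * (q ^ (s + 2) - q ^ (s + 1)) + (q + 1 - i) * m
          = (q + 1 - i) * M := by rw [← hDM]; ring
      omega
    · rintro ⟨k, l, hk1, hk2, hl1, hl2, rfl⟩
      refine ⟨q + 1 - k, k * m - l, ?_, ?_⟩
      · -- the inequality
        have hiP : q + 1 - k ≤ P := by omega
        have hkm : k * m + (q + 1 - k) * m = Q * q + 1 := by
          rw [← Nat.add_mul, Nat.add_sub_cancel' hk2, hm1']
        have C2' : (k * m - l) + (q + 1 - k) * m ≤ Q * P := by omega
        have key : (q + 1 - k) * M + (k * m - l) * (q * q) + (q + 1 - k) * q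
            = ((q + 1 - k) * m + (k * m - l)) * (q * q) + (q + 1 - k) := by
          calc (q + 1 - k) * M + (k * m - l) * (q * q) + (q + 1 - k) * q
              = (q + 1 - k) * (M + q) + (k * m - l) * (q * q) := by ring
          _ = (q + 1 - k) * (m * (q * q) + 1) + (k * m - l) * (q * q) := by rw [F1]
          _ = ((q + 1 - k) * m + (k * m - l)) * (q * q) + (q + 1 - k) := by ring
        have h2 : ((q + 1 - k) * m + (k * m - l)) * (q * q) ≤ Q * P * (q * q) :=
          Nat.mul_le_mul_right _ (by omega)
        have h3 : (q + 1 - k) ≤ (q + 1 - k) * q := Nat.le_mul_of_pos_right _ (by omega)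
        have h4 : Q * P * (q * q) = Q * q * q * P := by ring
        have e : (k * m - l) * q ^ 2 = (k * m - l) * (q * q) := by ring
        rw [pw2, e]
        omega
      · -- the value
        have hkM : k * M + (q + 1 - k) * M = q ^ (s + 3) + 1 := by
          rw [← Nat.add_mul, Nat.add_sub_cancel' hk2, hM1]
        have hkD : k * (q ^ (s + 2) - q ^ (s + 1)) + k * m = k * M := by
          rw [← hDM]; ring
        omega
end

section
/- Let p be prime, q = p^a, b | a with b < a, n ≥ 5 odd. If (q-1)·p^{a-b} + 1 ≤ m ≤ q·p^{a-b} - 1, then (q^{n-2}+1) does not divide qⁿ - q - 1 + m(q+1)(q^{n-3}(q - p^b) + 1), and the floor of (qⁿ - q - 1 + m(q+1)(q^{n-3}(q - p^b) + 1))/(q^{n-2}+1) equals q² - q + m(q - p^b + 1). -/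
set_option maxHeartbeats 1000000 in
theorem stmt_10 (p a b n m : ℕ) (hp : p.Prime) (hb : 0 < b) (hba : b ∣ a) (hlt : b < a)
    (hn : 5 ≤ n) (hodd : Odd n) (q : ℕ) (hq : q = p ^ a)
    (hm1 : (q - 1) * p ^ (a - b) + 1 ≤ m) (hm2 : m ≤ q * p ^ (a - b) - 1) :
    ¬ (q ^ (n - 2) + 1) ∣ (q ^ n - q - 1 + m * (q + 1) * (q ^ (n - 3) * (q - p ^ b) + 1)) ∧
    (q ^ n - q - 1 + m * (q + 1) * (q ^ (n - 3) * (q - p ^ b) + 1)) / (q ^ (n - 2) + 1)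
      = q ^ 2 - q + m * (q - p ^ b + 1) := by
  have hp2 : 2 ≤ p := hp.two_le
  set t := p ^ b with htdef
  set s := p ^ (a - b) with hsdef
  have hst : s * t = q := by rw [hq, hsdef, htdef, ← pow_add]; congr 1; omega
  have ht2 : 2 ≤ t := le_trans hp2 (Nat.le_self_pow hb.ne' p)
  have hs2 : 2 ≤ s := le_trans hp2 (Nat.le_self_pow (by omega) p)
  have htq : t < q := by rw [hq, htdef]; exact Nat.pow_lt_pow_right hp.one_lt hlt
  have hq4 : 4 ≤ q := by
    calc 4 = 2 * 2 := rfl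
      _ ≤ s * t := Nat.mul_le_mul hs2 ht2
      _ = q := hst
  -- rewrite exponents in terms of K := q^(n-5)
  set K := q ^ (n - 5) with hKdef
  have hK1 : 1 ≤ K := Nat.one_le_pow _ _ (by omega)
  have hn0 : q ^ n = K * q ^ 5 := by rw [hKdef, ← pow_add]; congr 1; omega
  have hn2 : q ^ (n - 2) = K * q ^ 3 := by rw [hKdef, ← pow_add]; congr 1; omega
  have hn3 : q ^ (n - 3) = K * q ^ 2 := by rw [hKdef, ← pow_add]; congr 1; omega
  rw [hn0, hn2, hn3]
  -- replace natural subtractions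
  have hqn : q + 1 ≤ K * q ^ 5 := by
    have h1 : q + 1 ≤ q ^ 5 := by
      calc q + 1 ≤ 2 * q := by omega
        _ ≤ q * q := Nat.mul_le_mul_right q (by omega)
        _ = q ^ 2 := by ring
        _ ≤ q ^ 5 := Nat.pow_le_pow_right (by omega) (by omega)
    calc q + 1 ≤ q ^ 5 := h1
      _ ≤ K * q ^ 5 := Nat.le_mul_of_pos_left _ hK1
  set c := K * q ^ 5 - q - 1 with hcdef
  have hc : K * q ^ 5 = c + q + 1 := by omega
  set d := q - t with hddef
  have hd : q = t + d := by omega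
  set e := q ^ 2 - q with hedef
  have he : q ^ 2 = e + q := by
    have : q ≤ q ^ 2 := Nat.le_self_pow (by norm_num) q
    omega
  -- integer versions
  have hcz : (c : ℤ) = (K : ℤ) * (q : ℤ) ^ 5 - q - 1 := by
    have := hc; zify at this; linarith
  have hdz : (d : ℤ) = (q : ℤ) - t := by
    have := hd; zify at this; linarith
  have hez : (e : ℤ) = (q : ℤ) ^ 2 - q := by
    have := he; zify at this; linarith
  clear_value t s K c d e
  -- remainder
  set r : ℤ := (K : ℤ) * (q : ℤ) ^ 4 - (q : ℤ) ^ 2 - 1 - (m : ℤ) * t * ((K : ℤ) * q ^ 2 - 1)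
    with hrdef
  clear_value r
  have hNz : ((c + m * (q + 1) * (K * q ^ 2 * d + 1) : ℕ) : ℤ)
      = ((K * q ^ 3 + 1 : ℕ) : ℤ) * ((e + m * (d + 1) : ℕ) : ℤ) + r := by
    push_cast
    rw [hrdef]
    linear_combination hcz - ((K : ℤ) * q ^ 3 + 1) * hez
      + (m : ℤ) * ((K : ℤ) * q ^ 2 - 1) * hdz
  have hq4z : (4 : ℤ) ≤ q := by exact_mod_cast hq4
  have ht2z : (2 : ℤ) ≤ t := by exact_mod_cast ht2
  have hK1z : (1 : ℤ) ≤ K := by exact_mod_cast hK1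
  have h16 : (16 : ℤ) ≤ (K : ℤ) * (q:ℤ) ^ 2 := by
    have h1 : (4:ℤ) * 4 ≤ (q:ℤ) * q := mul_le_mul hq4z hq4z (by norm_num) (by linarith)
    have h2 : (q:ℤ) ^ 2 ≤ (K : ℤ) * (q:ℤ) ^ 2 :=
      le_mul_of_one_le_left (by positivity) hK1z
    have h3 : (q:ℤ) ^ 2 = (q:ℤ) * q := sq (q:ℤ)
    linarith
  have hBz : (0 : ℤ) ≤ (K : ℤ) * q ^ 2 - 1 := by linarith
  have hmtU : (m : ℤ) * t ≤ (q : ℤ) ^ 2 - t := by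
    have h1 : (m + 1) * t ≤ q * s * t := by
      have : m + 1 ≤ q * s := by
        have : 0 < q * s := Nat.mul_pos (by omega) (by omega)
        omega
      exact Nat.mul_le_mul_right _ this
    have h2 : q * s * t = q ^ 2 := by rw [mul_assoc, hst]; ring
    rw [h2] at h1
    zify at h1
    linarith
  have hmtL : (q : ℤ) ^ 2 - q + t ≤ (m : ℤ) * t := by
    have h1 : ((q - 1) * s + 1) * t ≤ m * t := Nat.mul_le_mul_right _ hm1
    have h2 : ((q - 1) * s + 1) * t = (q - 1) * q + t := by
      rw [add_mul, one_mul, mul_assoc, hst]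
    rw [h2] at h1
    zify [show 1 ≤ q from by omega] at h1
    linarith [h1]
  have hr_pos : 0 < r := by
    have hA : (0 : ℤ) ≤ (q : ℤ) ^ 2 - t - m * t := by linarith
    have f1 := mul_nonneg hA hBz
    have f2 : (2:ℤ) * 15 ≤ (t:ℤ) * ((K : ℤ) * (q:ℤ) ^ 2 - 1) :=
      mul_le_mul ht2z (by linarith) (by norm_num) (by linarith)
    rw [hrdef]
    linarith [f1, f2]
  have hr_lt : r < ((K * q ^ 3 + 1 : ℕ) : ℤ) := by
    have hA : (0 : ℤ) ≤ (m : ℤ) * t - ((q : ℤ) ^ 2 - q + t) := by linarith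
    have f1 := mul_nonneg hA hBz
    have f2 : (0:ℤ) ≤ (t:ℤ) * ((K : ℤ) * (q:ℤ) ^ 2 - 1) :=
      mul_nonneg (by linarith) hBz
    push_cast
    rw [hrdef]
    linarith [f1, f2]
  constructor
  · intro hdvd
    have hdz' : ((K * q ^ 3 + 1 : ℕ) : ℤ) ∣ ((c + m * (q + 1) * (K * q ^ 2 * d + 1) : ℕ) : ℤ) :=
      Int.natCast_dvd_natCast.mpr hdvd
    have : ((K * q ^ 3 + 1 : ℕ) : ℤ) ∣ r := by
      have h3 : r = ((c + m * (q + 1) * (K * q ^ 2 * d + 1) : ℕ) : ℤ)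
          - ((K * q ^ 3 + 1 : ℕ) : ℤ) * ((e + m * (d + 1) : ℕ) : ℤ) := by linarith [hNz]
      rw [h3]
      exact dvd_sub hdz' (dvd_mul_right _ _)
    have := Int.le_of_dvd hr_pos this
    linarith
  · apply Nat.div_eq_of_lt_le
    · have : ((e + m * (d + 1)) * (K * q ^ 3 + 1) : ℕ) ≤
          ((c + m * (q + 1) * (K * q ^ 2 * d + 1)) : ℕ) := by
        have := hNz
        zify
        push_cast at this ⊢
        linarith [hr_pos, this]
      exact this
    · have : ((c + m * (q + 1) * (K * q ^ 2 * d + 1)) : ℕ) <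
          (e + m * (d + 1) + 1) * (K * q ^ 3 + 1) := by
        have := hNz
        zify
        have hr_lt' : r < (K:ℤ)*(q:ℤ)^3+1 := by
          have hc2 : ((K * q ^ 3 + 1 : ℕ) : ℤ) = (K:ℤ)*(q:ℤ)^3+1 := by push_cast; ring
          linarith [hr_lt, hc2.le, hc2.ge]
        push_cast at this ⊢
        linarith [hr_lt', this]
      exact this
end

section
/- Let p be prime, q = p^a, b | a with b < a, n ≥ 3 odd, and set A = q^{n-1} - q^{n-2}, k₀ = q + 1 - p^b, ℓ₀ = q^{n-3}(q - p^b) + 1. For a positive integer m, the inequality m·k₀·A + m·ℓ₀ ≥ (m-1)(qⁿ+1) + 2 holds if and only if m ≤ p^{a-b}. -/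
set_option maxHeartbeats 4000000


theorem stmt_14 (p a b n m : ℕ) (hp : p.Prime) (hb : 0 < b) (hba : b ∣ a) (hlt : b < a)
    (hn : 3 ≤ n) (hodd : Odd n) (hm : 0 < m) (q A k₀ ℓ₀ : ℕ) (hq : q = p ^ a)
    (hA : A = q ^ (n - 1) - q ^ (n - 2)) (hk₀ : k₀ = q + 1 - p ^ b)
    (hℓ₀ : ℓ₀ = q ^ (n - 3) * (q - p ^ b) + 1) :
    m * k₀ * A + m * ℓ₀ ≥ (m - 1) * (q ^ n + 1) + 2 ↔ m ≤ p ^ (a - b) := by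
  subst hq hA hk₀ hℓ₀
  obtain ⟨e, rfl⟩ : ∃ e, n = e + 3 := ⟨n - 3, by omega⟩
  obtain ⟨c, hc, rfl⟩ : ∃ c, 0 < c ∧ a = b + c := ⟨a - b, by omega, by omega⟩
  have hp2 : 2 ≤ p := hp.two_le
  set r := p ^ b with hr
  set t := p ^ c with ht
  have hr2 : 2 ≤ r := by
    calc 2 = 2 ^ 1 := rfl
    _ ≤ p ^ b := Nat.pow_le_pow_left hp2 1 |>.trans (Nat.pow_le_pow_right (by omega) hb)
  have ht2 : 2 ≤ t := by
    calc 2 = 2 ^ 1 := rfl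
    _ ≤ p ^ c := Nat.pow_le_pow_left hp2 1 |>.trans (Nat.pow_le_pow_right (by omega) hc)
  have hqrt : p ^ (b + c) = r * t := pow_add p b c
  have hbc : b + c - b = c := by omega
  rw [hqrt, hbc, ← ht]
  set q := r * t with hqdef
  have hq4 : 4 ≤ q := by
    calc 4 = 2 * 2 := rfl
    _ ≤ r * t := Nat.mul_le_mul hr2 ht2
  have h1 : e + 3 - 1 = e + 2 := rfl
  have h2 : e + 3 - 2 = e + 1 := rfl
  have h3 : e + 3 - 3 = e := rfl
  rw [h1, h2, h3]
  set Q := q ^ e with hQ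
  have hQ1 : 1 ≤ Q := Nat.one_le_pow _ _ (by omega)
  have he1 : q ^ (e + 1) = Q * q := by rw [pow_add, pow_one]
  have he2 : q ^ (e + 2) = Q * q ^ 2 := by rw [pow_add]
  have he3 : q ^ (e + 3) = Q * q ^ 3 := by rw [pow_add]
  rw [he1, he2, he3]
  clear_value Q q t r
  have hrq : r ≤ q := by rw [hqdef]; exact Nat.le_mul_of_pos_right _ (by omega)
  have hmul : Q * q ≤ Q * q ^ 2 := Nat.mul_le_mul_left Q (Nat.le_self_pow two_ne_zero q)
  constructor
  · intro h
    by_contra hmt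
    push_neg at hmt
    zify [show r ≤ q + 1 by omega, hmul, hrq, hm] at h
    have hmZ : (t : ℤ) + 1 ≤ (m : ℤ) := by exact_mod_cast hmt
    have hq4Z : (4 : ℤ) ≤ (q : ℤ) := by exact_mod_cast hq4
    have hr2Z : (2 : ℤ) ≤ (r : ℤ) := by exact_mod_cast hr2
    have hQ1Z : (1 : ℤ) ≤ (Q : ℤ) := by exact_mod_cast hQ1
    have hqdefZ : (q : ℤ) = (r : ℤ) * (t : ℤ) := by exact_mod_cast hqdef
    have hmr : (q : ℤ) + 2 ≤ (m : ℤ) * (r : ℤ) := by nlinarith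
    have hkey : (Q : ℤ) * (q : ℤ) ^ 3 ≥ (m : ℤ) * (r : ℤ) * (Q : ℤ) * ((q:ℤ)^2 - q + 1) + 1 := by
      linarith [h]
    linarith [mul_le_mul_of_nonneg_right hmr (show (0:ℤ) ≤ (Q:ℤ) * ((q:ℤ)^2 - q + 1) by nlinarith),
      mul_le_mul_of_nonneg_left (show (q:ℤ) ≤ (q:ℤ)^2 by nlinarith) (show (0:ℤ) ≤ (Q:ℤ) by linarith),
      hQ1Z]
  · intro h
    zify [show r ≤ q + 1 by omega, hmul, hrq, hm]
    have hmZ : (m : ℤ) ≤ (t : ℤ) := by exact_mod_cast h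
    have hq4Z : (4 : ℤ) ≤ (q : ℤ) := by exact_mod_cast hq4
    have hr2Z : (2 : ℤ) ≤ (r : ℤ) := by exact_mod_cast hr2
    have hQ1Z : (1 : ℤ) ≤ (Q : ℤ) := by exact_mod_cast hQ1
    have hqdefZ : (q : ℤ) = (r : ℤ) * (t : ℤ) := by exact_mod_cast hqdef
    have hmr : (m : ℤ) * (r : ℤ) ≤ (q : ℤ) := by nlinarith
    have hpos : (0:ℤ) ≤ (Q:ℤ) * ((q:ℤ)^2 - q + 1) :=
      mul_nonneg (by linarith) (by nlinarith [hq4Z])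
    have h12 : (1:ℤ) ≤ (q:ℤ) * ((q:ℤ) - 1) := by nlinarith [hq4Z]
    have haux : (1:ℤ) ≤ (Q:ℤ) * ((q:ℤ) * ((q:ℤ) - 1)) :=
      h12.trans (le_mul_of_one_le_left (by linarith) hQ1Z)
    have hkey : (m : ℤ) * (r : ℤ) * (Q : ℤ) * ((q:ℤ)^2 - q + 1) + 1 ≤ (Q : ℤ) * (q : ℤ) ^ 3 := by
      linarith [mul_le_mul_of_nonneg_right hmr hpos]
    linarith [hkey]
end
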